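/- arXiv:0712.2021 — 2 statements merged into one kernel-verified Lean document; each statement's English description precedes it below -/
import Mathlib

section
/- Left multiplication by ∂_j is injective on D_A/D_A·I_A for each j = 1,…,n. -/
/-!
STATEMENT 4: Left multiplication by `∂_j` is injective on `D_A / D_A · I_A` for each
`j = 1,…,n`, where `D_A` is the `n`-th Weyl algebra and `I_A` the toric ideal
(generated by the toric relations `∂^{u₊} - ∂^{u₋}`, `Au = 0`).
-/

inductive WGen (n : ℕ) : Type
  | x : Fin n → WGen n
  | d : Fin n → WGen n

inductive WeylRel (n : ℕ) : FreeAlgebra ℂ (WGen n) → FreeAlgebra ℂ (WGen n) → Prop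
  | xx (i j : Fin n) : WeylRel n
      (FreeAlgebra.ι ℂ (WGen.x i) * FreeAlgebra.ι ℂ (WGen.x j))
      (FreeAlgebra.ι ℂ (WGen.x j) * FreeAlgebra.ι ℂ (WGen.x i))
  | dd (i j : Fin n) : WeylRel n
      (FreeAlgebra.ι ℂ (WGen.d i) * FreeAlgebra.ι ℂ (WGen.d j))
      (FreeAlgebra.ι ℂ (WGen.d j) * FreeAlgebra.ι ℂ (WGen.d i))
  | dx (i j : Fin n) : WeylRel n
      (FreeAlgebra.ι ℂ (WGen.d i) * FreeAlgebra.ι ℂ (WGen.x j))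
      (FreeAlgebra.ι ℂ (WGen.x j) * FreeAlgebra.ι ℂ (WGen.d i) + if i = j then 1 else 0)

abbrev Weyl (n : ℕ) := RingQuot (WeylRel n)

noncomputable def Wx {n : ℕ} (i : Fin n) : Weyl n :=
  RingQuot.mkAlgHom ℂ (WeylRel n) (FreeAlgebra.ι ℂ (WGen.x i))

noncomputable def Wd {n : ℕ} (i : Fin n) : Weyl n :=
  RingQuot.mkAlgHom ℂ (WeylRel n) (FreeAlgebra.ι ℂ (WGen.d i))

/-- The monomial `∂^e` in the Weyl algebra (the `∂`'s commute, so the ordered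
product represents the monomial). -/
noncomputable def WdPow {n : ℕ} (e : Fin n → ℕ) : Weyl n :=
  (List.ofFn fun j : Fin n => Wd j ^ e j).prod

/-- The left ideal `D_A · I_A` of the Weyl algebra generated by the toric relations
`□_u = ∂^{u₊} - ∂^{u₋}` for `u ∈ ℤ^n` with `A u = 0`. -/
noncomputable def toricLeftIdeal {d n : ℕ} (A : Matrix (Fin d) (Fin n) ℤ) :
    Submodule (Weyl n) (Weyl n) :=
  Submodule.span (Weyl n) {w | ∃ u : Fin n → ℤ, A.mulVec u = 0 ∧
    w = WdPow (fun j => (u j).toNat) - WdPow (fun j => (-(u j)).toNat)}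




section ProdPow
variable {M : Type*} [Monoid M]

/-- ordered product of powers -/
def prodPow {k : ℕ} (f : Fin k → M) (a : Fin k → ℕ) : M :=
  (List.ofFn fun i => f i ^ a i).prod

lemma prodPow_zero {k : ℕ} (f : Fin k → M) : prodPow f 0 = 1 := by
  simp [prodPow]

lemma prodPow_succ {k : ℕ} (f : Fin (k + 1) → M) (a : Fin (k + 1) → ℕ) :
    prodPow f a = f 0 ^ a 0 * prodPow (f ∘ Fin.succ) (a ∘ Fin.succ) := by
  simp [prodPow, List.ofFn_succ, Function.comp]

lemma commute_prodPow {k : ℕ} {f : Fin k → M} {y : M} (h : ∀ i, Commute y (f i))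
    (a : Fin k → ℕ) : Commute y (prodPow f a) := by
  apply Commute.list_prod_right
  intro z hz
  rw [List.mem_ofFn] at hz
  obtain ⟨i, rfl⟩ := hz
  exact (h i).pow_right _

lemma prodPow_add {k : ℕ} (f : Fin k → M) (hf : ∀ i j, Commute (f i) (f j))
    (a b : Fin k → ℕ) : prodPow f (a + b) = prodPow f a * prodPow f b := by
  induction k with
  | zero => simp [prodPow]
  | succ k ih =>
    rw [prodPow_succ, prodPow_succ f a, prodPow_succ f b]
    have htail : ((a + b) ∘ Fin.succ) = (a ∘ Fin.succ) + (b ∘ Fin.succ) := rfl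
    rw [htail]
    rw [ih (f ∘ Fin.succ) (fun i j => hf _ _) (a ∘ Fin.succ) (b ∘ Fin.succ)]
    have hc : Commute (f 0 ^ b 0) (prodPow (f ∘ Fin.succ) (a ∘ Fin.succ)) :=
      commute_prodPow (fun i => ((hf 0 i.succ).pow_left _)) _
    have : (a + b) 0 = a 0 + b 0 := rfl
    rw [this, pow_add, mul_assoc, mul_assoc, ← mul_assoc (f 0 ^ b 0), hc.eq, mul_assoc]

lemma prodPow_single {k : ℕ} (f : Fin k → M) (j : Fin k) :
    prodPow f (Pi.single j 1) = f j := by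
  induction k with
  | zero => exact absurd j.2 (by omega)
  | succ k ih =>
    rw [prodPow_succ]
    rcases Fin.eq_zero_or_eq_succ j with rfl | ⟨j', rfl⟩
    · have h1 : (Pi.single (0 : Fin (k+1)) 1 : Fin (k+1) → ℕ) 0 = 1 := Pi.single_eq_same _ _
      have h2 : ((Pi.single (0 : Fin (k+1)) 1 : Fin (k+1) → ℕ) ∘ Fin.succ) = 0 := by
        funext i; simp [Function.comp, Pi.single_apply, (Fin.succ_ne_zero i)]
      rw [h1, h2, prodPow_zero, pow_one, mul_one]
    · have h1 : (Pi.single (j'.succ) 1 : Fin (k+1) → ℕ) 0 = 0 := by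
        simp [Pi.single_apply, (Fin.succ_ne_zero j').symm]
      have h2 : ((Pi.single j'.succ 1 : Fin (k+1) → ℕ) ∘ Fin.succ) = Pi.single j' 1 := by
        funext i; simp [Function.comp, Pi.single_apply, Fin.succ_inj]
      rw [h1, h2, ih, pow_zero, one_mul]; rfl

end ProdPow

section KeyComm
variable {R : Type*} [Ring R]

lemma pow_comm_aux {X D e : R} (hDX : D * X = X * D + e) (hcen : ∀ y, Commute e y) :
    ∀ m : ℕ, D * X ^ m = X ^ m * D + m • (X ^ (m - 1) * e)
  | 0 => by simp
  | 1 => by simpa using hDX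
  | (m + 2) => by
    have ih := pow_comm_aux hDX hcen (m + 1)
    have h1 : X ^ (m + 2) = X * X ^ (m + 1) := by rw [← pow_succ']
    have h2 : X ^ (m + 1) = X * X ^ m := by rw [← pow_succ']
    rw [h1, ← mul_assoc, hDX, add_mul, mul_assoc, ih, (hcen (X ^ (m+1))).eq]
    simp only [Nat.add_sub_cancel]
    rw [mul_add, ← mul_assoc, ← h1, mul_smul_comm, ← mul_assoc, ← h2, succ_nsmul]
    simp only [add_nsmul, one_nsmul, two_nsmul]
    abel

lemma key_comm : ∀ {k : ℕ} (X : Fin k → R) (D : R) (e : Fin k → R)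
    (hXX : ∀ i j, Commute (X i) (X j)) (hDX : ∀ i, D * X i = X i * D + e i)
    (hcen : ∀ i y, Commute (e i) y) (a : Fin k → ℕ),
    D * prodPow X a = prodPow X a * D + ∑ i, a i • (prodPow X (a - Pi.single i 1) * e i) := by
  intro k
  induction k with
  | zero => intro X D e _ _ _ a; simp [prodPow]
  | succ k ih =>
    intro X D e hXX hDX hcen a
    have hQ := ih (X ∘ Fin.succ) D (e ∘ Fin.succ) (fun i j => hXX _ _) (fun i => hDX _)
      (fun i y => hcen _ y) (a ∘ Fin.succ)
    have h0 := pow_comm_aux (hDX 0) (hcen 0) (a 0)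
    set Q := prodPow (X ∘ Fin.succ) (a ∘ Fin.succ) with hQdef
    have hhead : prodPow X (a - Pi.single 0 1) =
        X 0 ^ (a 0 - 1) * Q := by
      have e1 : (a - Pi.single 0 1 : Fin (k+1) → ℕ) 0 = a 0 - 1 := by simp
      have e2 : (a - Pi.single 0 1 : Fin (k+1) → ℕ) ∘ Fin.succ = a ∘ Fin.succ := by
        funext i
        simp [Function.comp, Pi.single_apply, (Fin.succ_ne_zero i)]
      rw [prodPow_succ, e1, e2]
    have htail : ∀ i : Fin k, prodPow X (a - Pi.single i.succ 1) =
        X 0 ^ a 0 * prodPow (X ∘ Fin.succ) ((a ∘ Fin.succ) - Pi.single i 1) := by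
      intro i
      have e1 : (a - Pi.single i.succ 1 : Fin (k+1) → ℕ) 0 = a 0 := by
        simp [Pi.single_apply, (Fin.succ_ne_zero i).symm]
      have e2 : (a - Pi.single i.succ 1 : Fin (k+1) → ℕ) ∘ Fin.succ = a ∘ Fin.succ - Pi.single i 1 := by
        funext i'
        simp [Function.comp, Pi.single_apply, Fin.succ_inj]
      rw [prodPow_succ, e1, e2]
    rw [prodPow_succ X a, Fin.sum_univ_succ, hhead]
    simp only [htail]
    rw [← mul_assoc, h0, add_mul, smul_mul_assoc, mul_assoc (X 0 ^ (a 0 - 1)) (e 0) Q,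
      (hcen 0 Q).eq, ← mul_assoc (X 0 ^ (a 0 - 1)) Q (e 0),
      mul_assoc (X 0 ^ a 0) D Q, hQ, mul_add, Finset.mul_sum]
    simp only [mul_smul_comm, ← mul_assoc, Function.comp_apply]
    abel

end KeyComm

section WeylBasic
variable {n : ℕ}

lemma wx_comm (i j : Fin n) : Wx i * Wx j = Wx j * Wx i := by
  unfold Wx
  rw [← map_mul, ← map_mul]
  exact RingQuot.mkAlgHom_rel ℂ (WeylRel.xx i j)

lemma wd_comm (i j : Fin n) : Wd i * Wd j = Wd j * Wd i := by
  unfold Wd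
  rw [← map_mul, ← map_mul]
  exact RingQuot.mkAlgHom_rel ℂ (WeylRel.dd i j)

lemma wdx (i j : Fin n) : Wd i * Wx j = Wx j * Wd i + if i = j then 1 else 0 := by
  unfold Wd Wx
  rw [← map_mul, ← map_mul, RingQuot.mkAlgHom_rel ℂ (WeylRel.dx i j), map_add]
  congr 1
  split_ifs <;> simp

lemma wdc : ∀ i j : Fin n, Commute (Wd i) (Wd j) := fun i j => wd_comm i j
lemma wxc : ∀ i j : Fin n, Commute (Wx i) (Wx j) := fun i j => wx_comm i j

lemma WdPow_eq (e : Fin n → ℕ) : WdPow e = prodPow Wd e := rfl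

lemma WdPow_add (a b : Fin n → ℕ) : WdPow (a + b) = WdPow a * WdPow b :=
  prodPow_add Wd wdc a b

lemma WdPow_single (j : Fin n) : WdPow (Pi.single j 1) = Wd j :=
  prodPow_single Wd j

lemma WdPow_zero : WdPow (0 : Fin n → ℕ) = 1 := prodPow_zero Wd

noncomputable def WxPow (a : Fin n → ℕ) : Weyl n := prodPow Wx a

lemma WxPow_add (a b : Fin n → ℕ) : WxPow (a + b) = WxPow a * WxPow b :=
  prodPow_add Wx wxc a b

lemma WxPow_single (j : Fin n) : WxPow (Pi.single j 1) = Wx j :=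
  prodPow_single Wx j

lemma WxPow_zero : WxPow (0 : Fin n → ℕ) = 1 := prodPow_zero Wx

lemma wd_wxpow (i : Fin n) (a : Fin n → ℕ) :
    Wd i * WxPow a = WxPow a * Wd i + a i • WxPow (a - Pi.single i 1) := by
  have h := key_comm Wx (Wd i) (fun j => if i = j then (1 : Weyl n) else 0) wxc
    (fun j => wdx i j) ?_ a
  · rw [WxPow, h]
    congr 1
    have : ∀ j : Fin n, a j • (prodPow Wx (a - Pi.single j 1) * if i = j then (1 : Weyl n) else 0)
        = if i = j then a j • prodPow Wx (a - Pi.single j 1) else 0 := by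
      intro j; split_ifs <;> simp
    rw [Finset.sum_congr rfl (fun j _ => this j), Finset.sum_ite_eq]
    simp [WxPow]
  · intro i' y
    split_ifs
    · exact Commute.one_left y
    · exact Commute.zero_left y

end WeylBasic

section Rep
variable {d n : ℕ}

abbrev BIdx (d n : ℕ) := (Fin n → ℕ) × (Fin d → ℤ)
abbrev VMod (d n : ℕ) := BIdx d n →₀ ℂ

/-- `j`-th column of `A`. -/
def colA (A : Matrix (Fin d) (Fin n) ℤ) (j : Fin n) : Fin d → ℤ := fun i => A i j

/-- `A b` for a natural vector `b`. -/
def Anat (A : Matrix (Fin d) (Fin n) ℤ) (b : Fin n → ℕ) : Fin d → ℤ :=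
  A.mulVec (fun j => (b j : ℤ))

lemma Anat_zero (A : Matrix (Fin d) (Fin n) ℤ) : Anat A 0 = 0 := by
  have : (fun j : Fin n => ((0:ℕ) : ℤ)) = (0 : Fin n → ℤ) := by funext; simp
  simp only [Anat, Pi.zero_apply, this, Matrix.mulVec_zero]

lemma Anat_add_single (A : Matrix (Fin d) (Fin n) ℤ) (b : Fin n → ℕ) (j : Fin n) :
    Anat A (b + Pi.single j 1) = Anat A b + colA A j := by
  unfold Anat colA
  have h : (fun i => ((b + Pi.single j 1 : Fin n → ℕ) i : ℤ))
      = (fun i => (b i : ℤ)) + Pi.single j 1 := by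
    funext i
    rcases eq_or_ne i j with rfl | hij
    · simp
    · simp [Pi.single_eq_of_ne hij]
  rw [h, Matrix.mulVec_add]
  congr 1
  funext i
  rw [Matrix.mulVec_single]
  simp [Matrix.transpose]

noncomputable def Xop (i : Fin n) : Module.End ℂ (VMod d n) :=
  Finsupp.lmapDomain ℂ ℂ (fun p : BIdx d n => (p.1 + Pi.single i 1, p.2))

noncomputable def Dop (A : Matrix (Fin d) (Fin n) ℤ) (i : Fin n) :
    Module.End ℂ (VMod d n) :=
  Finsupp.lmapDomain ℂ ℂ (fun p : BIdx d n => (p.1, p.2 + colA A i)) +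
  Finsupp.lsum ℂ (fun p : BIdx d n =>
    (p.1 i : ℂ) • Finsupp.lsingle (p.1 - Pi.single i 1, p.2))

lemma Xop_single (i : Fin n) (p : BIdx d n) (r : ℂ) :
    Xop i (Finsupp.single p r) = Finsupp.single (p.1 + Pi.single i 1, p.2) r := by
  simp [Xop, Finsupp.mapDomain_single]

lemma Dop_single (A : Matrix (Fin d) (Fin n) ℤ) (i : Fin n) (p : BIdx d n) (r : ℂ) :
    Dop A i (Finsupp.single p r) = Finsupp.single (p.1, p.2 + colA A i) r +
      (p.1 i : ℂ) • Finsupp.single (p.1 - Pi.single i 1, p.2) r := by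
  simp [Dop, Finsupp.mapDomain_single]

end Rep

section Rel
variable {d n : ℕ} (A : Matrix (Fin d) (Fin n) ℤ)

lemma rel_xx (i j : Fin n) : (Xop i * Xop j : Module.End ℂ (VMod d n)) = Xop j * Xop i := by
  apply Finsupp.lhom_ext
  intro p r
  simp only [Module.End.mul_apply, Xop_single]
  congr 1
  exact Prod.ext (add_right_comm _ _ _) rfl

lemma rel_dd (i j : Fin n) :
    (Dop A i * Dop A j : Module.End ℂ (VMod d n)) = Dop A j * Dop A i := by
  rcases eq_or_ne i j with rfl | hij
  · rfl
  apply Finsupp.lhom_ext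
  intro p r
  obtain ⟨a, m⟩ := p
  simp only [Module.End.mul_apply, Dop_single, map_add, map_smul]
  have h1 : (a - Pi.single j 1 : Fin n → ℕ) i = a i := by
    simp [Pi.single_eq_of_ne hij]
  have h2 : (a - Pi.single i 1 : Fin n → ℕ) j = a j := by
    simp [Pi.single_eq_of_ne (Ne.symm hij)]
  have h3 : a - Pi.single j 1 - Pi.single i 1 = a - Pi.single i 1 - Pi.single j 1 := by
    funext x; simp only [Pi.sub_apply]; omega
  have h4 : m + colA A j + colA A i = m + colA A i + colA A j := add_right_comm _ _ _
  simp only [Dop_single, h1, h2, h3, h4, smul_add, smul_smul]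
  rw [mul_comm ((a j : ℂ)) ((a i : ℂ))]
  abel

lemma rel_dx (i j : Fin n) :
    (Dop A i * Xop j : Module.End ℂ (VMod d n)) =
      Xop j * Dop A i + if i = j then 1 else 0 := by
  apply Finsupp.lhom_ext
  intro p r
  obtain ⟨a, m⟩ := p
  simp only [Module.End.mul_apply, LinearMap.add_apply, Xop_single, Dop_single, map_add,
    map_smul]
  rcases eq_or_ne i j with rfl | hij
  · simp only [if_pos rfl, Module.End.one_apply]
    have h1 : (((a + Pi.single i 1 : Fin n → ℕ)) i : ℂ) = (a i : ℂ) + 1 := by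
      push_cast [Pi.add_apply, Pi.single_eq_same]
      ring
    have h2 : a + Pi.single i 1 - Pi.single i 1 = a := by
      funext x
      rcases eq_or_ne x i with rfl | h
      · simp
      · simp [Pi.single_eq_of_ne h]
    rw [h1, h2]
    rcases Nat.eq_zero_or_pos (a i) with h0 | h0
    · have : ((a i : ℂ)) = 0 := by rw [h0]; simp
      simp [this, add_smul]
    · have h3 : a - Pi.single i 1 + Pi.single i 1 = a := by
        funext x
        rcases eq_or_ne x i with rfl | h
        · simp only [Pi.sub_apply, Pi.add_apply, Pi.single_eq_same]; omega
        · simp [Pi.single_eq_of_ne h]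
      rw [h3, add_smul, one_smul]
      abel
  · simp only [if_neg hij, add_zero, LinearMap.zero_apply]
    have h1 : (((a + Pi.single j 1 : Fin n → ℕ)) i : ℂ) = (a i : ℂ) := by
      simp [Pi.single_eq_of_ne hij]
    have h2 : a + Pi.single j 1 - Pi.single i 1 = a - Pi.single i 1 + Pi.single j 1 := by
      funext x
      rcases eq_or_ne x i with rfl | hxi
      · simp only [Pi.add_apply, Pi.sub_apply, Pi.single_eq_same, Pi.single_eq_of_ne hij]
        omega
      · rcases eq_or_ne x j with rfl | hxj
        · simp only [Pi.add_apply, Pi.sub_apply, Pi.single_eq_same, Pi.single_eq_of_ne hxi]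
          omega
        · simp [Pi.single_eq_of_ne hxi, Pi.single_eq_of_ne hxj]
    simp only [h1, h2]
    try abel

end Rel

section Phi
variable {d n : ℕ} (A : Matrix (Fin d) (Fin n) ℤ)

noncomputable def genOp : WGen n → Module.End ℂ (VMod d n)
  | WGen.x i => Xop i
  | WGen.d i => Dop A i

noncomputable def phiA : Weyl n →ₐ[ℂ] Module.End ℂ (VMod d n) :=
  RingQuot.liftAlgHom ℂ ⟨FreeAlgebra.lift ℂ (genOp A), by
    intro x y h
    induction h with
    | xx i j => simp only [map_mul, FreeAlgebra.lift_ι_apply, genOp]; exact rel_xx i j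
    | dd i j => simp only [map_mul, FreeAlgebra.lift_ι_apply, genOp]; exact rel_dd A i j
    | dx i j =>
      simp only [map_mul, map_add, FreeAlgebra.lift_ι_apply, genOp]
      rw [rel_dx A i j]
      congr 1
      split_ifs <;> simp⟩

lemma phiA_wx (i : Fin n) : phiA A (Wx i) = Xop i := by
  simp [phiA, Wx, RingQuot.liftAlgHom_mkAlgHom_apply, FreeAlgebra.lift_ι_apply, genOp]

lemma phiA_wd (i : Fin n) : phiA A (Wd i) = Dop A i := by
  simp [phiA, Wd, RingQuot.liftAlgHom_mkAlgHom_apply, FreeAlgebra.lift_ι_apply, genOp]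

lemma sum_pos_exists (b : Fin n → ℕ) (h : ∑ i, b i ≠ 0) : ∃ j, b j ≠ 0 := by
  by_contra hc
  push_neg at hc
  exact h (Finset.sum_eq_zero fun i _ => hc i)

lemma sub_single_add (b : Fin n → ℕ) (j : Fin n) (h : b j ≠ 0) :
    b - Pi.single j 1 + Pi.single j 1 = b := by
  funext x
  rcases eq_or_ne x j with rfl | hx
  · simp only [Pi.add_apply, Pi.sub_apply, Pi.single_eq_same]; omega
  · simp [Pi.single_eq_of_ne hx]

lemma phiA_wdpow_aux : ∀ (N : ℕ) (b : Fin n → ℕ), (∑ i, b i) = N → ∀ (m : Fin d → ℤ) (r : ℂ),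
    phiA A (WdPow b) (Finsupp.single ((0 : Fin n → ℕ), m) r) =
      Finsupp.single (0, m + Anat A b) r := by
  intro N
  induction N with
  | zero =>
    intro b hb m r
    have : b = 0 := by
      funext i
      exact Finset.sum_eq_zero_iff.mp hb i (Finset.mem_univ i)
    subst this
    rw [WdPow_zero, map_one, Module.End.one_apply, Anat_zero, add_zero]
  | succ N ih =>
    intro b hb m r
    obtain ⟨j, hj⟩ := sum_pos_exists b (by omega)
    have hdec : b - Pi.single j 1 + Pi.single j 1 = b := sub_single_add b j hj
    have hsum : (∑ i, (b - Pi.single j 1 : Fin n → ℕ) i) = N := by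
      have h1 : ∑ i, b i = (∑ i, (b - Pi.single j 1 : Fin n → ℕ) i) + ∑ i, (Pi.single j 1 : Fin n → ℕ) i := by
        rw [← Finset.sum_add_distrib]
        apply Finset.sum_congr rfl
        intro i _
        have := congrFun hdec i
        simpa using this.symm
      have h2 : ∑ i, (Pi.single j 1 : Fin n → ℕ) i = 1 := by
        simp [Finset.sum_pi_single]
      omega
    rw [← hdec, WdPow_add, WdPow_single, map_mul, Module.End.mul_apply, phiA_wd]
    have hD : Dop A j (Finsupp.single ((0 : Fin n → ℕ), m) r) =
        Finsupp.single (0, m + colA A j) r := by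
      rw [Dop_single]
      simp
    rw [hD, ih _ hsum, Anat_add_single, add_assoc, add_comm (colA A j)]

lemma phiA_wdpow (b : Fin n → ℕ) (m : Fin d → ℤ) (r : ℂ) :
    phiA A (WdPow b) (Finsupp.single ((0 : Fin n → ℕ), m) r) =
      Finsupp.single (0, m + Anat A b) r :=
  phiA_wdpow_aux A _ b rfl m r

lemma phiA_wxpow_aux : ∀ (N : ℕ) (a : Fin n → ℕ), (∑ i, a i) = N → ∀ (p : BIdx d n) (r : ℂ),
    phiA A (WxPow a) (Finsupp.single p r) = Finsupp.single (p.1 + a, p.2) r := by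
  intro N
  induction N with
  | zero =>
    intro a ha p r
    have : a = 0 := by
      funext i
      exact Finset.sum_eq_zero_iff.mp ha i (Finset.mem_univ i)
    subst this
    rw [WxPow_zero, map_one, Module.End.one_apply, add_zero]
  | succ N ih =>
    intro a ha p r
    obtain ⟨j, hj⟩ := sum_pos_exists a (by omega)
    have hdec : a - Pi.single j 1 + Pi.single j 1 = a := sub_single_add a j hj
    have hsum : (∑ i, (a - Pi.single j 1 : Fin n → ℕ) i) = N := by
      have h1 : ∑ i, a i = (∑ i, (a - Pi.single j 1 : Fin n → ℕ) i) + ∑ i, (Pi.single j 1 : Fin n → ℕ) i := by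
        rw [← Finset.sum_add_distrib]
        apply Finset.sum_congr rfl
        intro i _
        have := congrFun hdec i
        simpa using this.symm
      have h2 : ∑ i, (Pi.single j 1 : Fin n → ℕ) i = 1 := by
        simp [Finset.sum_pi_single]
      omega
    rw [← hdec, WxPow_add, WxPow_single, map_mul, Module.End.mul_apply, phiA_wx, Xop_single,
      ih _ hsum]
    congr 1
    simp only
    rw [add_assoc, add_comm (Pi.single j 1)]

lemma phiA_wxpow (a : Fin n → ℕ) (p : BIdx d n) (r : ℂ) :
    phiA A (WxPow a) (Finsupp.single p r) = Finsupp.single (p.1 + a, p.2) r :=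
  phiA_wxpow_aux A _ a rfl p r

/-- evaluation at the vacuum vector -/
noncomputable def psiA (w : Weyl n) : VMod d n :=
  phiA A w (Finsupp.single ((0 : Fin n → ℕ), (0 : Fin d → ℤ)) 1)

lemma psiA_mono (a b : Fin n → ℕ) :
    psiA A (WxPow a * WdPow b) = Finsupp.single (a, Anat A b) 1 := by
  unfold psiA
  rw [map_mul, Module.End.mul_apply, phiA_wdpow, phiA_wxpow]
  simp

end Phi

section Ideal
variable {d n : ℕ} (A : Matrix (Fin d) (Fin n) ℤ)

lemma gen_mem (b b' : Fin n → ℕ) (h : Anat A b = Anat A b') :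
    WdPow b - WdPow b' ∈ toricLeftIdeal A := by
  set u : Fin n → ℤ := fun j => (b j : ℤ) - (b' j : ℤ) with hu
  have hAu : A.mulVec u = 0 := by
    have h1 : u = (fun j => (b j : ℤ)) - (fun j => (b' j : ℤ)) := rfl
    rw [h1, Matrix.mulVec_sub, sub_eq_zero]
    exact h
  have hgen : WdPow (fun j => (u j).toNat) - WdPow (fun j => (-(u j)).toNat)
      ∈ toricLeftIdeal A := Submodule.subset_span ⟨u, hAu, rfl⟩
  have hb : b = (fun j => min (b j) (b' j)) + (fun j => (u j).toNat) := by
    funext j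
    simp only [Pi.add_apply, hu, Int.toNat_sub]
    omega
  have hb' : b' = (fun j => min (b j) (b' j)) + (fun j => (-(u j)).toNat) := by
    funext j
    have h2 : -(u j) = (b' j : ℤ) - (b j : ℤ) := by simp [hu]
    simp only [Pi.add_apply, h2, Int.toNat_sub]
    omega
  have hcalc : WdPow b - WdPow b' = WdPow (fun j => min (b j) (b' j)) •
      (WdPow (fun j => (u j).toNat) - WdPow (fun j => (-(u j)).toNat)) := by
    rw [smul_eq_mul, mul_sub, ← WdPow_add, ← WdPow_add, ← hb, ← hb']
  rw [hcalc]
  exact Submodule.smul_mem _ _ hgen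

noncomputable def psiL : Weyl n →ₗ[ℂ] VMod d n where
  toFun := psiA A
  map_add' x y := by simp [psiA, map_add]
  map_smul' r x := by simp [psiA, map_smul]

lemma psiL_ideal (w : Weyl n) (hw : w ∈ toricLeftIdeal A) : psiL A w = 0 := by
  induction hw using Submodule.span_induction with
  | mem x hx =>
    obtain ⟨u, hAu, rfl⟩ := hx
    have hA : Anat A (fun j => (u j).toNat) = Anat A (fun j => (-(u j)).toNat) := by
      unfold Anat
      rw [← sub_eq_zero, ← Matrix.mulVec_sub]
      convert hAu using 2
      funext j
      simp only [Pi.sub_apply]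
      omega
    show psiA A _ = 0
    unfold psiA
    rw [map_sub, LinearMap.sub_apply, sub_eq_zero]
    rw [show ((phiA A) (WdPow fun j => (u j).toNat)) = phiA A (WdPow fun j => (u j).toNat) from rfl]
    have e1 := phiA_wdpow A (fun j => (u j).toNat) 0 1
    have e2 := phiA_wdpow A (fun j => (-(u j)).toNat) 0 1
    rw [e1, e2, hA]
  | zero => simp
  | add x y _ _ hx hy => rw [map_add, hx, hy, add_zero]
  | smul r x _ hx =>
    show psiA A (r • x) = 0
    rw [smul_eq_mul]
    unfold psiA
    rw [map_mul, Module.End.mul_apply]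
    have : ((phiA A) x) (Finsupp.single ((0 : Fin n → ℕ), (0 : Fin d → ℤ)) 1) = 0 := hx
    rw [this, map_zero]

/-- degree in the `x`-variables -/
def degB (p : BIdx d n) : ℕ := ∑ i, p.1 i

lemma Dop_ker (i : Fin n) (v : VMod d n) (hv : Dop A i v = 0) : v = 0 := by
  by_contra hne
  have hsupp : v.support.Nonempty := Finsupp.support_nonempty_iff.mpr hne
  obtain ⟨p₀, hp₀, hmax⟩ := Finset.exists_mem_eq_sup v.support hsupp degB
  set Nm := v.support.sup degB with hNm
  set f : BIdx d n → BIdx d n := fun p => (p.1, p.2 + colA A i) with hf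
  have hfinj : Function.Injective f := by
    intro p p' h
    have h1 := congrArg Prod.fst h
    have h2 := congrArg Prod.snd h
    simp only [hf] at h1 h2
    exact Prod.ext h1 (by exact add_right_cancel h2)
  have heval : (Dop A i v) (f p₀) = v p₀ := by
    rw [Dop, LinearMap.add_apply, Finsupp.add_apply]
    have e1 : (Finsupp.lmapDomain ℂ ℂ f v) (f p₀) = v p₀ := by
      simp only [Finsupp.lmapDomain_apply]
      exact Finsupp.mapDomain_apply hfinj v p₀
    have e2 : ((Finsupp.lsum ℂ (fun p : BIdx d n =>
        (p.1 i : ℂ) • Finsupp.lsingle (p.1 - Pi.single i 1, p.2)) :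
        VMod d n →ₗ[ℂ] VMod d n) v) (f p₀) = 0 := by
      rw [Finsupp.lsum_apply]
      rw [Finsupp.sum_apply]
      apply Finset.sum_eq_zero
      intro p hp
      simp only [LinearMap.smul_apply, Finsupp.lsingle_apply, Finsupp.smul_apply]
      rcases Nat.eq_zero_or_pos (p.1 i) with h0 | h0
      · simp [h0]
      · have hdeg : degB (p.1 - Pi.single i 1, p.2) < Nm := by
          have hle : degB p ≤ Nm := Finset.le_sup hp
          have : degB (p.1 - Pi.single i 1, p.2) + 1 = degB p := by
            unfold degB
            have hdec := sub_single_add p.1 i (by omega)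
            calc (∑ x, (p.1 - Pi.single i 1 : Fin n → ℕ) x) + 1
                = (∑ x, (p.1 - Pi.single i 1 : Fin n → ℕ) x) +
                  ∑ x, (Pi.single i 1 : Fin n → ℕ) x := by
                  rw [Finset.sum_pi_single']; simp
              _ = ∑ x, ((p.1 - Pi.single i 1 : Fin n → ℕ) x +
                  (Pi.single i 1 : Fin n → ℕ) x) := (Finset.sum_add_distrib).symm
              _ = ∑ x, p.1 x := by
                  apply Finset.sum_congr rfl
                  intro x _
                  have := congrFun hdec x
                  simpa using this
          omega
        have hq : degB (f p₀) = Nm := by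
          simp only [hf, degB]
          exact hmax.symm
        have hne' : (p.1 - Pi.single i 1, p.2) ≠ f p₀ := by
          intro hEq
          rw [hEq, hq] at hdeg
          omega
        rw [Finsupp.single_apply_eq_zero.mpr (fun h => absurd h.symm ?_)]
        · simp
        · exact fun h => hne' h
    rw [e1, e2, add_zero]
  rw [hv] at heval
  simp only [Finsupp.coe_zero, Pi.zero_apply] at heval
  exact (Finsupp.mem_support_iff.mp hp₀) heval.symm

end Ideal

section Span
variable {d n : ℕ} (A : Matrix (Fin d) (Fin n) ℤ)

open scoped Classical in
/-- a choice of preimage under `Anat` -/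
noncomputable def sigmaA (m : Fin d → ℤ) : Fin n → ℕ :=
  if h : ∃ b, Anat A b = m then h.choose else 0

lemma sigmaA_spec {b : Fin n → ℕ} {m : Fin d → ℤ} (h : Anat A b = m) :
    Anat A (sigmaA A m) = m := by
  have hex : ∃ b, Anat A b = m := ⟨b, h⟩
  classical
  rw [sigmaA]
  rw [dif_pos hex]
  exact hex.choose_spec

/-- normal-form monomials -/
noncomputable def FF (q : (Fin n → ℕ) × (Fin n → ℕ)) : Weyl n :=
  WxPow q.1 * WdPow (sigmaA A (Anat A q.2))

noncomputable def TT : Submodule ℂ (Weyl n) :=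
  (toricLeftIdeal A).restrictScalars ℂ ⊔ Submodule.span ℂ (Set.range (FF A))

lemma ideal_le_TT (w : Weyl n) (hw : w ∈ toricLeftIdeal A) : w ∈ TT A :=
  Submodule.mem_sup_left hw

lemma FF_mem_TT (q : (Fin n → ℕ) × (Fin n → ℕ)) : FF A q ∈ TT A :=
  Submodule.mem_sup_right (Submodule.subset_span ⟨q, rfl⟩)

lemma one_mem_TT : (1 : Weyl n) ∈ TT A := by
  have h1 : FF A (0, 0) ∈ TT A := FF_mem_TT A _
  have h2 : FF A (0, 0) - 1 ∈ toricLeftIdeal A := by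
    have : FF A (0, 0) - 1 = WdPow (sigmaA A (Anat A 0)) - WdPow 0 := by
      rw [FF, WxPow_zero, one_mul, WdPow_zero]
    rw [this]
    exact gen_mem A _ _ (sigmaA_spec A rfl)
  have := Submodule.sub_mem (TT A) h1 (ideal_le_TT A _ h2)
  simpa using this

lemma wx_mul_mem_TT (i : Fin n) (w : Weyl n) (hw : w ∈ TT A) : Wx i * w ∈ TT A := by
  rw [TT, Submodule.mem_sup] at hw ⊢
  obtain ⟨t, ht, s, hs, rfl⟩ := hw
  refine ⟨Wx i * t, ?_, Wx i * s, ?_, by rw [mul_add]⟩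
  · exact Submodule.smul_mem (toricLeftIdeal A) (Wx i) ht
  · induction hs using Submodule.span_induction with
    | mem x hx =>
      obtain ⟨q, rfl⟩ := hx
      have : Wx i * FF A q = FF A (Pi.single i 1 + q.1, q.2) := by
        rw [FF, FF, ← mul_assoc, ← WxPow_single, ← WxPow_add]
      rw [this]
      exact Submodule.subset_span ⟨_, rfl⟩
    | zero => rw [mul_zero]; exact Submodule.zero_mem _
    | add x y _ _ hx hy => rw [mul_add]; exact Submodule.add_mem _ hx hy
    | smul r x _ hx => rw [mul_smul_comm]; exact Submodule.smul_mem _ r hx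

lemma wd_mul_FF_mem_TT (i : Fin n) (q : (Fin n → ℕ) × (Fin n → ℕ)) :
    Wd i * FF A q ∈ TT A := by
  obtain ⟨a, b⟩ := q
  set c := sigmaA A (Anat A b) with hc
  have step1 : Wd i * FF A (a, b) =
      WxPow a * WdPow (c + Pi.single i 1) + a i • (WxPow (a - Pi.single i 1) * WdPow c) := by
    rw [FF, ← mul_assoc, wd_wxpow, add_mul, smul_mul_assoc, mul_assoc]
    congr 2
    rw [← WdPow_single, ← WdPow_add, add_comm]
  rw [step1]
  apply Submodule.add_mem
  · -- rewrite ∂^{c+e_i} into normal form modulo the ideal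
    have hmod : WdPow (c + Pi.single i 1) - WdPow (sigmaA A (Anat A (c + Pi.single i 1)))
        ∈ toricLeftIdeal A := gen_mem A _ _ (sigmaA_spec A rfl).symm
    have hsplit : WxPow a * WdPow (c + Pi.single i 1) =
        WxPow a * (WdPow (c + Pi.single i 1) - WdPow (sigmaA A (Anat A (c + Pi.single i 1)))) +
        FF A (a, c + Pi.single i 1) := by
      rw [FF, mul_sub]
      abel
    rw [hsplit]
    apply Submodule.add_mem
    · exact ideal_le_TT A _ (Submodule.smul_mem (toricLeftIdeal A) (WxPow a) hmod)
    · exact FF_mem_TT A _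
  · have : WxPow (a - Pi.single i 1) * WdPow c = FF A (a - Pi.single i 1, b) := rfl
    rw [this]
    exact nsmul_mem (FF_mem_TT A _) _

lemma wd_mul_mem_TT (i : Fin n) (w : Weyl n) (hw : w ∈ TT A) : Wd i * w ∈ TT A := by
  rw [TT, Submodule.mem_sup] at hw
  obtain ⟨t, ht, s, hs, rfl⟩ := hw
  rw [mul_add]
  apply Submodule.add_mem
  · exact ideal_le_TT A _ (Submodule.smul_mem (toricLeftIdeal A) (Wd i) ht)
  · induction hs using Submodule.span_induction with
    | mem x hx =>
      obtain ⟨q, rfl⟩ := hx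
      exact wd_mul_FF_mem_TT A i q
    | zero => rw [mul_zero]; exact Submodule.zero_mem _
    | add x y _ _ hx hy => rw [mul_add]; exact Submodule.add_mem _ hx hy
    | smul r x _ hx => rw [mul_smul_comm]; exact Submodule.smul_mem _ r hx

lemma TT_top : ∀ w : Weyl n, w ∈ TT A := by
  let S : Subalgebra ℂ (Weyl n) :=
    { carrier := {w | ∀ t, t ∈ TT A → w * t ∈ TT A}
      mul_mem' := fun ha hb t ht => by
        rw [mul_assoc]; exact ha _ (hb _ ht)
      one_mem' := fun t ht => by rw [one_mul]; exact ht
      add_mem' := fun ha hb t ht => by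
        rw [add_mul]; exact Submodule.add_mem _ (ha _ ht) (hb _ ht)
      algebraMap_mem' := fun r t ht => by
        rw [← Algebra.smul_def]; exact Submodule.smul_mem _ r ht }
  have hgen : ∀ g : WGen n, (RingQuot.mkAlgHom ℂ (WeylRel n) (FreeAlgebra.ι ℂ g)) ∈ S := by
    intro g
    cases g with
    | x i => exact fun t ht => wx_mul_mem_TT A i t ht
    | d i => exact fun t ht => wd_mul_mem_TT A i t ht
  have htop : S = ⊤ := by
    rw [eq_top_iff]
    have h1 : Algebra.adjoin ℂ (Set.range (fun g : WGen n =>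
        RingQuot.mkAlgHom ℂ (WeylRel n) (FreeAlgebra.ι ℂ g))) = ⊤ := by
      have h2 : (Set.range fun g : WGen n =>
          RingQuot.mkAlgHom ℂ (WeylRel n) (FreeAlgebra.ι ℂ g)) =
          (RingQuot.mkAlgHom ℂ (WeylRel n)) '' (Set.range (FreeAlgebra.ι ℂ)) := by
        rw [← Set.range_comp]; rfl
      rw [h2, Algebra.adjoin_image, FreeAlgebra.adjoin_range_ι, Algebra.map_top]
      rw [AlgHom.range_eq_top]
      exact RingQuot.mkAlgHom_surjective ℂ (WeylRel n)
    rw [← h1]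
    apply Algebra.adjoin_le
    rintro x ⟨g, rfl⟩
    exact hgen g
  intro w
  have hw : w ∈ S := htop ▸ Algebra.mem_top
  have := hw 1 (one_mem_TT A)
  rwa [mul_one] at this

end Span

/-- Left multiplication by `∂_j` is injective on `D_A / D_A I_A`. -/
theorem partial_injective_on_quotient {d n : ℕ} (A : Matrix (Fin d) (Fin n) ℤ)
    (j : Fin n) :
    Function.Injective fun m : Weyl n ⧸ toricLeftIdeal A => Wd j • m := by
  have key : ∀ w : Weyl n, Wd j * w ∈ toricLeftIdeal A → w ∈ toricLeftIdeal A := by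
    intro w hw
    have h0 : psiL A (Wd j * w) = 0 := psiL_ideal A _ hw
    have h1 : Dop A j (psiL A w) = 0 := by
      have heq : psiL A (Wd j * w) = Dop A j (psiL A w) := by
        show psiA A (Wd j * w) = _
        unfold psiA
        rw [map_mul, Module.End.mul_apply, phiA_wd]
        rfl
      rw [← heq, h0]
    have h2 : psiL A w = 0 := Dop_ker A j _ h1
    have hT := TT_top A w
    rw [TT, Submodule.mem_sup] at hT
    obtain ⟨t, ht, s, hs, hw'⟩ := hT
    rw [Finsupp.mem_span_range_iff_exists_finsupp] at hs
    obtain ⟨c, hc⟩ := hs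
    set τ : (Fin n → ℕ) × (Fin n → ℕ) → BIdx d n := fun q => (q.1, Anat A q.2) with hτ
    have hpsiF : ∀ q, psiL A (FF A q) = Finsupp.single (τ q) 1 := by
      intro q
      show psiA A _ = _
      rw [FF, psiA_mono, sigmaA_spec A rfl]
    have hpsis : psiL A s = Finsupp.mapDomain τ c := by
      rw [← hc, map_finsuppSum, Finsupp.mapDomain]
      apply Finsupp.sum_congr
      intro q _
      rw [map_smul, hpsiF, Finsupp.smul_single, smul_eq_mul, mul_one]
    have hpsit : psiL A t = 0 := psiL_ideal A t ht
    have hpsiw : psiL A s = 0 := by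
      have hsum : psiL A t + psiL A s = 0 := by
        rw [← map_add, hw', h2]
      rw [hpsit, zero_add] at hsum
      exact hsum
    have hmd : Finsupp.mapDomain τ c = 0 := hpsis.symm.trans hpsiw
    have hs0 : s = 0 := by
      calc s = c.sum fun q r => r • FF A q := hc.symm
        _ = (Finsupp.mapDomain τ c).sum
            (fun p r => r • (WxPow p.1 * WdPow (sigmaA A p.2))) := by
            rw [Finsupp.sum_mapDomain_index]
            · rfl
            · intro p
              exact zero_smul ℂ _
            · intro p r1 r2
              exact add_smul r1 r2 _
        _ = 0 := by rw [hmd, Finsupp.sum_zero_index]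
    rw [← hw', hs0, add_zero]
    exact ht
  intro z z' h
  obtain ⟨w, rfl⟩ := Submodule.Quotient.mk_surjective _ z
  obtain ⟨w', rfl⟩ := Submodule.Quotient.mk_surjective _ z'
  simp only at h
  rw [← Submodule.Quotient.mk_smul, ← Submodule.Quotient.mk_smul, Submodule.Quotient.eq] at h
  have hsub : Wd j • w - Wd j • w' = Wd j * (w - w') := by
    rw [smul_eq_mul, smul_eq_mul, mul_sub]
  rw [hsub] at h
  rw [Submodule.Quotient.eq]
  exact key _ h
end

section
/- Let F be a face of A and b_1, b_2, …, b_k ∈ Z^d be elements all lying in the same coset of (QF ∩ Z^d)/ZF and such that each −b_i ∈ C F + Z^d appropriately; then the intersection ∩_{i=1}^k (N F − b_i) of translated copies of the semigroup N F is nonempty. Consequently, if a Z^d-graded module M has k filtration quotients isomorphic to S_F(b_{s_1}),…,S_F(b_{s_k}) with the b_{s_i} in a common coset of (QF∩Z^d)/ZF, then dim_C M_c ≥ k for some c ∈ Z^d. -/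
open scoped BigOperators

def col {d n : ℕ} (A : Matrix (Fin d) (Fin n) ℤ) (j : Fin n) : Fin d → ℤ := fun i => A i j

noncomputable def posPt {n : ℕ} (u : Fin n → ℤ) : Fin n →₀ ℕ :=
  Finsupp.equivFunOnFinite.symm fun j => (u j).toNat

/-- The toric ideal `I_A ⊆ ℂ[∂]`. -/
noncomputable def toricIdeal {d n : ℕ} (A : Matrix (Fin d) (Fin n) ℤ) :
    Ideal (MvPolynomial (Fin n) ℂ) :=
  Ideal.span {p | ∃ u : Fin n → ℤ, A.mulVec u = 0 ∧
    p = MvPolynomial.monomial (posPt u) 1 - MvPolynomial.monomial (posPt (-u)) 1}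

/-- The semigroup ring `S_A = ℂ[ℕA] = ℂ[∂]/I_A`. -/
noncomputable abbrev SAring {d n : ℕ} (A : Matrix (Fin d) (Fin n) ℤ) :=
  MvPolynomial (Fin n) ℂ ⧸ toricIdeal A

/-- The semigroup `ℕF` generated by the columns in `F`. -/
def NFsg {d n : ℕ} (A : Matrix (Fin d) (Fin n) ℤ) (F : Finset (Fin n)) :
    AddSubmonoid (Fin d → ℤ) :=
  AddSubmonoid.closure (col A '' F)

/-- `F` is a face of `A`: cut out by a supporting functional. -/
def isFace {d n : ℕ} (A : Matrix (Fin d) (Fin n) ℤ) (F : Finset (Fin n)) : Prop :=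
  ∃ h : Fin d → ℤ, (∀ j : Fin n, 0 ≤ ∑ i, h i * A i j) ∧
    ∀ j : Fin n, j ∈ F ↔ ∑ i, h i * A i j = 0

/-- The face prime `I_A^F/I_A = ⟨∂_j : j ∉ F⟩ ⊆ S_A`, the annihilator of the
generator of the face ring `S_F` as a cyclic `S_A`-module. -/
noncomputable def facePrime {d n : ℕ} (A : Matrix (Fin d) (Fin n) ℤ)
    (F : Finset (Fin n)) : Ideal (SAring A) :=
  Ideal.span {x | ∃ j ∉ F, x = Ideal.Quotient.mk (toricIdeal A) (MvPolynomial.X j)}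

/-- Zariski closure in `ℂ^d` of a set of lattice points. -/
def zariskiClosure {d : ℕ} (S : Set (Fin d → ℤ)) : Set (Fin d → ℂ) :=
  {z | ∀ p : MvPolynomial (Fin d) ℂ,
    (∀ v ∈ S, MvPolynomial.eval (fun i => (v i : ℂ)) p = 0) → MvPolynomial.eval z p = 0}

/-- `qdeg S_F(b)`: the Zariski closure of `b - ℕF`, the quasi-degrees of the shifted
face ring with generator in degree `b` (with `deg ∂_j = -a_j`). -/
def qdegFace {d n : ℕ} (A : Matrix (Fin d) (Fin n) ℤ) (F : Finset (Fin n))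
    (b : Fin d → ℤ) : Set (Fin d → ℂ) :=
  zariskiClosure {c | ∃ v ∈ NFsg A F, c = b - v}

/-- The lattice `ℤF` generated by the columns in `F`. -/
def ZFlat {d n : ℕ} (A : Matrix (Fin d) (Fin n) ℤ) (F : Finset (Fin n)) :
    Submodule ℤ (Fin d → ℤ) :=
  Submodule.span ℤ (col A '' F)

/-!
Since `ℕF` generates `ℤF` as a group, each `b_i - b_1` is a difference `p_i - q_i` of elements
of `ℕF`, and `c = ∑ q_j - b_1` puts every `c + b_i` into `ℕF`.

For the dimension bound, write `c + b_i ∈ ℕF` as the degree of an element `r_i` of `S_A` that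
is a product of the `∂_j` with `j ∈ F`; then `r_i m_i` lies in `M_{-c}`. The character of `S_A`
sending `∂_j` to `t^{a_j}` for `j ∈ F` and to `0` otherwise is well defined because `F` is a
face, kills the face prime and sends `r_i` to a monomial, so `r_i` avoids the face prime. Hence
`r_i m_i ∈ N_{i+1} \ N_i`, and vectors climbing a filtration one step at a time are linearly
independent.
-/

theorem exists_sub_eq_of_mem_span_int {G : Type*} [AddCommGroup G] {s : Set G} {x : G}
    (hx : x ∈ Submodule.span ℤ s) :
    ∃ p ∈ AddSubmonoid.closure s, ∃ q ∈ AddSubmonoid.closure s, p - q = x := by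
  rw [← Submodule.mem_toAddSubgroup, Submodule.span_int_eq_addSubgroupClosure,
    ← AddSubgroup.mem_toAddSubmonoid, AddSubgroup.closure_toAddSubmonoid,
    AddSubmonoid.closure_union, AddSubmonoid.mem_sup] at hx
  obtain ⟨p, hp, q, hq, rfl⟩ := hx
  refine ⟨p, hp, -q, ?_, sub_neg_eq_add p q⟩
  rwa [AddSubmonoid.closure_neg, AddSubmonoid.mem_neg] at hq

theorem exists_forall_add_mem_closure_of_sub_mem_span_int {G ι : Type*} [AddCommGroup G]
    [Fintype ι] {s : Set G} (b : ι → G) (hb : ∀ i j, b i - b j ∈ Submodule.span ℤ s) :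
    ∃ c, ∀ i, c + b i ∈ AddSubmonoid.closure s := by
  classical
  rcases isEmpty_or_nonempty ι with hι | ⟨⟨i₀⟩⟩
  · exact ⟨0, isEmptyElim⟩
  choose p hp q hq hpq using fun i => exists_sub_eq_of_mem_span_int (hb i i₀)
  -- `c + b i = p i + ∑_{j ≠ i} q j`
  refine ⟨∑ j, q j - b i₀, fun i => ?_⟩
  have hbi : b i = p i - q i + b i₀ := by rw [hpq i, sub_add_cancel]
  rw [hbi, ← Finset.add_sum_erase _ _ (Finset.mem_univ i)]
  convert (AddSubmonoid.closure s).add_mem (hp i) (AddSubmonoid.sum_mem _ fun j _ => hq j) using 1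
  abel

theorem linearIndependent_of_mem_succ_of_notMem_castSucc {K V : Type*} [DivisionRing K]
    [AddCommGroup V] [Module K V] {k : ℕ} (P : Fin (k + 1) → Submodule K V) (hP : Monotone P)
    (f : Fin k → V) (hmem : ∀ i, f i ∈ P i.succ) (hnot : ∀ i, f i ∉ P i.castSucc) :
    LinearIndependent K f := by
  induction k with
  | zero => exact linearIndependent_empty_type
  | succ k ih =>
    rw [← Fin.snoc_init_self f, linearIndependent_finSnoc]
    refine ⟨ih (P ∘ Fin.castSucc) (hP.comp Fin.strictMono_castSucc.monotone) _
      (fun i => by simpa [Fin.init] using hmem i.castSucc) (fun i => hnot i.castSucc), ?_⟩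
    refine fun hspan => hnot (Fin.last k) (Submodule.span_le.mpr ?_ hspan)
    rintro _ ⟨i, rfl⟩
    exact hP (Fin.succ_le_castSucc_iff.mpr (Fin.castSucc_lt_last i)) (hmem i.castSucc)

open scoped Matrix

section Face

variable {d n : ℕ} (A : Matrix (Fin d) (Fin n) ℤ) (F : Finset (Fin n))

theorem mulVec_posPt_eq_of_mulVec_eq_zero {u : Fin n → ℤ} (hu : A *ᵥ u = 0) :
    A *ᵥ (fun j => (posPt u j : ℤ)) = A *ᵥ (fun j => (posPt (-u) j : ℤ)) := by
  rw [← sub_eq_zero, ← Matrix.mulVec_sub, ← hu]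
  congr 1
  funext j
  simp [posPt]

variable {A F} in
theorem isFace.exists_support_subset_iff (hF : isFace A F) :
    ∃ h : Fin d → ℤ, ∀ v : Fin n →₀ ℕ,
      (∀ j ∈ v.support, j ∈ F) ↔ h ⬝ᵥ (A *ᵥ fun j => (v j : ℤ)) = 0 := by
  obtain ⟨h, hnonneg, hzero⟩ := hF
  refine ⟨h, fun v => ?_⟩
  rw [Matrix.dotProduct_mulVec]
  change _ ↔ ∑ j, (∑ i, h i * A i j) * (v j : ℤ) = 0
  rw [Finset.sum_eq_zero_iff_of_nonneg fun j _ => mul_nonneg (hnonneg j) (by positivity)]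
  simp [hzero, or_iff_not_imp_right]

noncomputable def faceCharacter :
    MvPolynomial (Fin n) ℂ →ₐ[ℂ] AddMonoidAlgebra ℂ (Fin d → ℤ) :=
  MvPolynomial.aeval fun j => if j ∈ F then AddMonoidAlgebra.single (col A j) 1 else 0

theorem faceCharacter_monomial (v : Fin n →₀ ℕ) :
    faceCharacter A F (MvPolynomial.monomial v 1) =
      if ∀ j ∈ v.support, j ∈ F then AddMonoidAlgebra.single (A *ᵥ fun j => (v j : ℤ)) 1
      else 0 := by
  rw [faceCharacter, MvPolynomial.aeval_monomial, map_one, one_mul]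
  split_ifs with hv
  · rw [Finsupp.prod, Finset.prod_congr rfl fun j hj => by
      rw [if_pos (hv j hj), AddMonoidAlgebra.single_pow, one_pow],
      AddMonoidAlgebra.prod_single, Finset.prod_const_one]
    congr 1
    funext i
    simp only [nsmul_eq_mul, mul_comm, Finset.sum_apply, Pi.mul_apply, col, Pi.natCast_apply,
      Matrix.mulVec, dotProduct]
    exact Finset.sum_subset (Finset.subset_univ _) fun j _ hj => by
      simp [Finsupp.notMem_support_iff.mp hj]
  · push Not at hv
    obtain ⟨j, hj, hjF⟩ := hv
    exact Finset.prod_eq_zero hj (by simp [hjF, Finsupp.mem_support_iff.mp hj])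

variable {A F}

theorem toricIdeal_le_ker_faceCharacter (hF : isFace A F) :
    toricIdeal A ≤ RingHom.ker (faceCharacter A F) := by
  obtain ⟨h, hh⟩ := hF.exists_support_subset_iff
  rw [toricIdeal, Ideal.span_le]
  rintro _ ⟨u, hu, rfl⟩
  simp only [SetLike.mem_coe, RingHom.mem_ker, map_sub, sub_eq_zero, faceCharacter_monomial, hh,
    mulVec_posPt_eq_of_mulVec_eq_zero A hu]

noncomputable def liftFaceCharacter (hF : isFace A F) :
    SAring A →+* AddMonoidAlgebra ℂ (Fin d → ℤ) :=
  Ideal.Quotient.lift _ (faceCharacter A F) fun _ ha => toricIdeal_le_ker_faceCharacter hF ha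

theorem notMem_facePrime_of_liftFaceCharacter_eq_single (hF : isFace A F) {r : SAring A}
    {v : Fin d → ℤ} (hr : liftFaceCharacter hF r = AddMonoidAlgebra.single v 1) :
    r ∉ facePrime A F := by
  have hker : facePrime A F ≤ RingHom.ker (liftFaceCharacter hF) := by
    rw [facePrime, Ideal.span_le]
    rintro _ ⟨j, hj, rfl⟩
    simp [liftFaceCharacter, faceCharacter, hj]
  intro hmem
  simpa [hr] using hker hmem

theorem exists_smul_mem_sub_of_mem_NFsg (hF : isFace A F) {M : Type*} [AddCommGroup M]
    [Module ℂ M] [Module (SAring A) M] (g : (Fin d → ℤ) → Submodule ℂ M)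
    (hX : ∀ (j : Fin n) (b' : Fin d → ℤ), ∀ m ∈ g b',
      (Ideal.Quotient.mk (toricIdeal A) (MvPolynomial.X j)) • m ∈ g (b' - col A j))
    {v : Fin d → ℤ} (hv : v ∈ NFsg A F) :
    ∃ r : SAring A, liftFaceCharacter hF r = AddMonoidAlgebra.single v 1 ∧
      ∀ b' : Fin d → ℤ, ∀ m ∈ g b', r • m ∈ g (b' - v) := by
  induction hv using AddSubmonoid.closure_induction with
  | mem _ hv =>
    obtain ⟨j, hj, rfl⟩ := hv
    exact ⟨_, by simp [liftFaceCharacter, faceCharacter, Finset.mem_coe.mp hj], hX j⟩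
  | zero => exact ⟨1, by simp [AddMonoidAlgebra.one_def], by simp⟩
  | add v w _ _ hv hw =>
    obtain ⟨r, hr, hrg⟩ := hv
    obtain ⟨s, hs, hsg⟩ := hw
    refine ⟨r * s, by simp [hr, hs], fun b' m hm => ?_⟩
    rw [mul_smul, sub_add_eq_sub_sub_swap]
    exact hrg _ _ (hsg _ _ hm)

end Face

theorem face_coset_intersection_and_dim_bound {d n : ℕ}
    (A : Matrix (Fin d) (Fin n) ℤ) (F : Finset (Fin n)) (hF : isFace A F)
    (k : ℕ) (b : Fin k → Fin d → ℤ)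
    -- the `b_i` lie in a common coset of `(ℚF ∩ ℤ^d)/ℤF`; in particular their
    -- pairwise differences lie in `ℤF`:
    (hcoset : ∀ i i' : Fin k, b i - b i' ∈ ZFlat A F) :
    -- the translated semigroups `ℕF - b_i` have a common element:
    (∃ c : Fin d → ℤ, ∀ i : Fin k, c + b i ∈ NFsg A F) ∧
    -- the consequence for filtered graded modules:
    (∀ (M : Type) [AddCommGroup M] [Module ℂ M] [Module (SAring A) M]
        [IsScalarTower ℂ (SAring A) M],
      ∀ g : (Fin d → ℤ) → Submodule ℂ M,
        DirectSum.IsInternal g →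
        (∀ (j : Fin n) (b' : Fin d → ℤ), ∀ m ∈ g b',
          (Ideal.Quotient.mk (toricIdeal A) (MvPolynomial.X j)) • m ∈ g (b' - col A j)) →
        ∀ N : Fin (k + 1) → Submodule (SAring A) M, Monotone N →
        ∀ mg : Fin k → M,
        (∀ i : Fin k, mg i ∈ g (b i) ∧ mg i ∈ N i.succ ∧
          N i.succ = N i.castSucc ⊔ Submodule.span (SAring A) {mg i} ∧
          ∀ r : SAring A, r • mg i ∈ N i.castSucc ↔ r ∈ facePrime A F) →
        ∃ c : Fin d → ℤ, (k : Cardinal) ≤ Module.rank ℂ ↥(g c)) := by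
  obtain ⟨c, hc⟩ := exists_forall_add_mem_closure_of_sub_mem_span_int b hcoset
  refine ⟨⟨c, hc⟩, fun M _ _ _ _ g _ hX N hN mg hmg => ?_⟩
  choose r hr hrg using fun i => exists_smul_mem_sub_of_mem_NFsg hF g hX (hc i)
  have hdeg : ∀ i, r i • mg i ∈ g (-c) := fun i => by
    simpa using hrg i _ _ (hmg i).1
  have hli : LinearIndependent ℂ fun i => r i • mg i :=
    linearIndependent_of_mem_succ_of_notMem_castSucc (fun i => (N i).restrictScalars ℂ)
      (fun _ _ hij => hN hij) _ (fun i => (N i.succ).smul_mem _ (hmg i).2.1)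
      fun i hi => notMem_facePrime_of_liftFaceCharacter_eq_single hF (hr i)
        (((hmg i).2.2.2 _).mp hi)
  refine ⟨-c, ?_⟩
  simpa using (LinearIndependent.of_comp (g (-c)).subtype
    (v := fun i => ⟨_, hdeg i⟩) hli).cardinal_le_rank
end
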